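/- Let r be an even integer and s any integer. Then ∑_{n=1}^∞ 4^n·n·F_{rn+s} / ((2n+1)·L_r^n·C_n) = (F_{3r+s} + (L_r/2)·F_{2r+s})·(L_r/2) + (L_r·L_{2r+s} − 4·L_{3r+s})·(L_r^2/(4·√5))·arctan(β^r) + (4·L_{3r+s} − L_r·L_{2r+s} + (4·F_{3r+s} − L_r·F_{2r+s})·√5)·(π·L_r^2/(16·√5)). -/

import Mathlib

open MeasureTheory intervalIntegral Real


/-- The golden ratio `α = (1+√5)/2`. -/
noncomputable def goldenAlpha : ℝ := (1 + Real.sqrt 5) / 2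

/-- `β = (1-√5)/2`. -/
noncomputable def goldenBeta : ℝ := (1 - Real.sqrt 5) / 2

/-- Fibonacci numbers with integer index, via the Binet formula. -/
noncomputable def fibZ (s : ℤ) : ℝ := (goldenAlpha ^ s - goldenBeta ^ s) / Real.sqrt 5

/-- Lucas numbers with integer index, via the Binet formula. -/
noncomputable def lucasZ (s : ℤ) : ℝ := goldenAlpha ^ s + goldenBeta ^ s

lemma beta_int (a b : ℕ) :
    ∫ t in (0:ℝ)..1, t ^ a * (1 - t) ^ b
      = (a.factorial : ℝ) * b.factorial / (a + b + 1).factorial := by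
  induction b generalizing a with
  | zero =>
    simp only [pow_zero, mul_one, integral_pow]
    rw [Nat.factorial_zero, Nat.factorial_succ]
    push_cast
    rw [one_pow, zero_pow (Nat.succ_ne_zero a)]
    field_simp
    norm_num
  | succ b ih =>
    have hderiv : ∀ t ∈ Set.uIcc (0:ℝ) 1,
        HasDerivAt (fun t : ℝ => t ^ (a+1) * (1 - t) ^ (b+1))
          (((a:ℝ)+1) * t ^ a * (1-t)^(b+1) - ((b:ℝ)+1) * t^(a+1) * (1-t)^b) t := by
      intro t _
      have h1 : HasDerivAt (fun t : ℝ => t ^ (a+1)) (((a:ℝ)+1) * t ^ a) t := by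
        simpa using hasDerivAt_pow (a+1) t
      have h2 : HasDerivAt (fun t : ℝ => (1 - t) ^ (b+1))
          (-(((b:ℝ)+1) * (1-t)^b)) t := by
        have h0 : HasDerivAt (fun t : ℝ => 1 - t) (-1) t := by
          simpa using (hasDerivAt_id t).const_sub 1
        have := h0.fun_pow (b+1)
        simpa [mul_comm] using this
      have := h1.fun_mul h2
      refine this.congr_deriv ?_
      push_cast
      ring
    have hint : (∫ t in (0:ℝ)..1,
        (((a:ℝ)+1) * t ^ a * (1-t)^(b+1) - ((b:ℝ)+1) * t^(a+1) * (1-t)^b))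
        = (1:ℝ)^(a+1) * (1-1)^(b+1) - (0:ℝ)^(a+1) * (1-0)^(b+1) :=
      integral_eq_sub_of_hasDerivAt hderiv (by
        apply Continuous.intervalIntegrable
        fun_prop)
    have e1 : IntervalIntegrable (fun t : ℝ => ((a:ℝ)+1) * t ^ a * (1-t)^(b+1)) volume 0 1 := by
      apply Continuous.intervalIntegrable; fun_prop
    have e2 : IntervalIntegrable (fun t : ℝ => ((b:ℝ)+1) * t^(a+1) * (1-t)^b) volume 0 1 := by
      apply Continuous.intervalIntegrable; fun_prop
    rw [integral_sub e1 e2] at hint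
    simp only [mul_assoc] at hint
    rw [intervalIntegral.integral_const_mul, intervalIntegral.integral_const_mul] at hint
    have hb := ih (a+1)
    have h0 : (0:ℝ)^(a+1) = 0 := zero_pow (Nat.succ_ne_zero a)
    have h1 : (1:ℝ) - 1 = 0 := by norm_num
    rw [h1, zero_pow (Nat.succ_ne_zero b), h0] at hint
    simp only [mul_zero, zero_mul, sub_zero] at hint
    -- hint : (a+1) * ∫ t^a (1-t)^(b+1) - (b+1) * ∫ t^(a+1)(1-t)^b = 0
    have ha1 : ((a:ℝ)+1) ≠ 0 := by positivity
    have key : (∫ t in (0:ℝ)..1, t ^ a * (1 - t) ^ (b+1))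
        = ((b:ℝ)+1) / ((a:ℝ)+1) * ∫ t in (0:ℝ)..1, t ^ (a+1) * (1 - t) ^ b := by
      field_simp
      linarith [hint]
    rw [key, hb]
    have e3 : a + 1 + b + 1 = a + (b+1) + 1 := by omega
    rw [e3, Nat.factorial_succ b, Nat.factorial_succ a]
    have hfac : (0:ℝ) < ((a+(b+1)+1).factorial : ℝ) := by positivity
    push_cast
    field_simp

lemma beta_sym (k : ℕ) :
    ∫ t in (0:ℝ)..1, (t * (1 - t)) ^ k
      = 1 / ((2 * (k:ℝ) + 1) * ((2*k).choose k : ℝ)) := by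
  have h : ∀ t : ℝ, (t * (1-t))^k = t^k * (1-t)^k := fun t => mul_pow _ _ _
  simp only [h]
  rw [beta_int k k]
  have hch : ((2*k).choose k : ℝ) * (k.factorial : ℝ) * (k.factorial : ℝ) = ((2*k).factorial : ℝ) := by
    have := Nat.choose_mul_factorial_mul_factorial (Nat.le_mul_of_pos_left k (by norm_num) : k ≤ 2*k)
    have h2 : 2*k - k = k := by omega
    rw [h2] at this
    exact_mod_cast congrArg (Nat.cast : ℕ → ℝ) this
  have hkk : k + k + 1 = 2*k + 1 := by omega
  rw [hkk, Nat.factorial_succ]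
  have hf : (0:ℝ) < ((2*k).factorial : ℝ) := by positivity
  have hk : (0:ℝ) < (k.factorial : ℝ) := by positivity
  push_cast
  rw [← hch]
  have hc : (0:ℝ) < ((2*k).choose k : ℝ) := by
    exact_mod_cast Nat.cast_pos.mpr (Nat.choose_pos (by omega))
  field_simp

lemma choose_two_cast (n : ℕ) : (((n+2).choose 2 : ℕ) : ℝ) = ((n:ℝ)+2)*((n:ℝ)+1)/2 := by
  have hc : 2 * ((n+2).choose 2) = (n+2)*(n+1) := by
    induction n with
    | zero => rfl
    | succ m ihm =>
      have h3 : (m+3).choose 2 = (m+2) + (m+2).choose 2 := by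
        have := Nat.choose_succ_succ (m+2) 1
        rwa [Nat.choose_one_right] at this
      rw [show m+1+2 = m+3 from rfl, h3, Nat.mul_add, ihm]
      ring
  have := congrArg (Nat.cast : ℕ → ℝ) hc
  push_cast at this
  linarith

lemma hasSum_nn {u : ℝ} (h1 : |u| < 1) :
    HasSum (fun n : ℕ => ((n:ℝ)+1) * ((n:ℝ)+2) * u^(n+1)) (2*u/(1-u)^3) := by
  have h : HasSum (fun n : ℕ => (((n+2).choose 2 : ℕ) : ℝ) * u ^ n) (1 / (1-u)^(2+1)) :=
    hasSum_choose_mul_geometric_of_norm_lt_one 2 (by simpa [Real.norm_eq_abs] using h1)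
  have h2 := h.mul_left (2*u)
  convert h2 using 1 with n
  · rfl
  · funext n
    rw [choose_two_cast]
    ring
  · rw [mul_one_div, mul_div_assoc]

lemma D_pos {x : ℝ} (hx0 : 0 < x) (hx1 : x < 1) (t : ℝ) :
    0 < 1 - 4*x*t*(1-t) := by
  have h : 1 - 4*x*t*(1-t) = (1-x) + x*(2*t-1)^2 := by ring
  rw [h]
  have : 0 ≤ x*(2*t-1)^2 := by positivity
  linarith

lemma ftc_eval {x : ℝ} (hx0 : 0 < x) (hx1 : x < 1) :
    ∫ t in (0:ℝ)..1, 8*x*t*(1-t)/(1-4*x*t*(1-t))^3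
      = (3 - 2*(1-x))/(4*(1-x)^2)
        + (3 - 4*(1-x))/(4*(1-x)^3 * Real.sqrt (x/(1-x)))
          * Real.arctan (Real.sqrt (x/(1-x))) := by
  set c : ℝ := 1 - x with hc
  have hcpos : 0 < c := by simp [hc]; linarith
  set q : ℝ := Real.sqrt (x/c) with hqdef
  have hqpos : 0 < q := Real.sqrt_pos.mpr (by positivity)
  have hq2 : q^2 = x/c := Real.sq_sqrt (by positivity)
  set Φ : ℝ → ℝ := fun t =>
    (2*t-1)/(4*c*(1-4*x*t*(1-t))^2) + (3-4*c)*(2*t-1)/(8*c^2*(1-4*x*t*(1-t)))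
      + (3-4*c)/(8*c^3*q) * Real.arctan (q*(2*t-1)) with hΦ
  have hderiv : ∀ t ∈ Set.uIcc (0:ℝ) 1, HasDerivAt Φ (8*x*t*(1-t)/(1-4*x*t*(1-t))^3) t := by
    intro t _
    have hD : 0 < 1 - 4*x*t*(1-t) := D_pos hx0 hx1 t
    have hDne : (1 - 4*x*t*(1-t)) ≠ 0 := hD.ne'
    have hw : HasDerivAt (fun t : ℝ => 2*t-1) 2 t := by
      simpa using ((hasDerivAt_id t).const_mul 2).sub_const 1
    have hDd : HasDerivAt (fun t : ℝ => 1-4*x*t*(1-t)) (-(4*x*(1-2*t))) t := by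
      have h0 : HasDerivAt (fun t : ℝ => t*(1-t)) (1-2*t) t := by
        have := (hasDerivAt_id t).fun_mul ((hasDerivAt_id t).const_sub 1)
        refine this.congr_deriv ?_
        simp; ring
      have h1 := (h0.const_mul (4*x)).const_sub 1
      have hfun : (fun t : ℝ => 1-4*x*t*(1-t)) = (fun t : ℝ => 1 - 4*x*(t*(1-t))) := by
        funext u; ring
      rw [hfun]
      exact h1
    have h1 : HasDerivAt (fun t : ℝ => (2*t-1)/(4*c*(1-4*x*t*(1-t))^2))
        ((2*(4*c*(1-4*x*t*(1-t))^2) - (2*t-1)*(4*c*(2*(1-4*x*t*(1-t))^(2-1)*(-(4*x*(1-2*t))))))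
          / (4*c*(1-4*x*t*(1-t))^2)^2) t := by
      exact hw.div ((hDd.pow 2).const_mul (4*c)) (by positivity)
    have h2 : HasDerivAt (fun t : ℝ => (3-4*c)*(2*t-1)/(8*c^2*(1-4*x*t*(1-t))))
        (((3-4*c)*2*(8*c^2*(1-4*x*t*(1-t))) - (3-4*c)*(2*t-1)*(8*c^2*(-(4*x*(1-2*t)))))
          / (8*c^2*(1-4*x*t*(1-t)))^2) t := by
      exact (hw.const_mul (3-4*c)).div (hDd.const_mul (8*c^2)) (by positivity)
    have h3 : HasDerivAt (fun t : ℝ => (3-4*c)/(8*c^3*q) * Real.arctan (q*(2*t-1)))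
        ((3-4*c)/(8*c^3*q) * (1/(1+(q*(2*t-1))^2) * (q*2))) t := by
      have harc : HasDerivAt Real.arctan (1/(1+(q*(2*t-1))^2)) (q*(2*t-1)) := by
        simpa using Real.hasDerivAt_arctan (q*(2*t-1))
      exact (harc.comp t (hw.const_mul q)).const_mul _
    have := (h1.fun_add h2).fun_add h3
    refine this.congr_deriv ?_
    have hqq : 1 + (q*(2*t-1))^2 = (1-4*x*t*(1-t))/c := by
      have : (q*(2*t-1))^2 = (x/c)*(2*t-1)^2 := by rw [mul_pow, hq2]
      rw [this]
      field_simp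
      ring
    rw [hqq]
    have hx' : x = 1 - c := by rw [hc]; ring
    field_simp
    rw [hx']
    ring
  have hcont : IntervalIntegrable (fun t => 8*x*t*(1-t)/(1-4*x*t*(1-t))^3) MeasureTheory.volume 0 1 := by
    apply ContinuousOn.intervalIntegrable
    apply ContinuousOn.div
    · fun_prop
    · fun_prop
    · intro t _
      exact pow_ne_zero 3 (D_pos hx0 hx1 t).ne'
  rw [integral_eq_sub_of_hasDerivAt hderiv hcont]
  have e1 : (1:ℝ)-4*x*1*(1-1) = 1 := by ring
  have e0 : (1:ℝ)-4*x*0*(1-0) = 1 := by ring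
  rw [hΦ]
  simp only [e1, e0]
  rw [show q*(2*1-1) = q by ring, show q*(2*0-1) = -q by ring, Real.arctan_neg]
  field_simp
  ring

lemma hasSum_G {x : ℝ} (hx0 : 0 < x) (hx1 : x < 1) :
    HasSum (fun n : ℕ =>
        4^(n+1) * ((n:ℝ)+1) * x^(n+1) / ((2*((n:ℝ)+1)+1) * (catalan (n+1) : ℝ)))
      ((3 - 2*(1-x))/(4*(1-x)^2)
        + (3 - 4*(1-x))/(4*(1-x)^3 * Real.sqrt (x/(1-x)))
          * Real.arctan (Real.sqrt (x/(1-x)))) := by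
  set F : ℕ → ℝ → ℝ := fun n t => ((n:ℝ)+1)*((n:ℝ)+2)*(4*x*(t*(1-t)))^(n+1) with hF
  -- basic facts about t ∈ Ioc 0 1
  have hu_mem : ∀ t ∈ Set.Ioc (0:ℝ) 1, 0 ≤ 4*x*(t*(1-t)) ∧ 4*x*(t*(1-t)) ≤ x := by
    intro t ht
    obtain ⟨ht0, ht1⟩ := ht
    constructor
    · have h1 : 0 ≤ 1 - t := by linarith
      positivity
    · nlinarith [sq_nonneg (2*t-1)]
  -- integral of each term
  have hInt : ∀ n : ℕ, ∫ t in Set.Ioc (0:ℝ) 1, F n t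
      = 4^(n+1) * ((n:ℝ)+1) * x^(n+1) / ((2*((n:ℝ)+1)+1) * (catalan (n+1) : ℝ)) := by
    intro n
    rw [← intervalIntegral.integral_of_le zero_le_one]
    have h1 : ∀ t : ℝ, F n t = ((n:ℝ)+1)*((n:ℝ)+2)*(4*x)^(n+1) * (t*(1-t))^(n+1) := by
      intro t
      rw [hF]
      simp only
      rw [show (4*x*(t*(1-t))) = (4*x)*(t*(1-t)) by ring, mul_pow]
      ring
    simp only [h1]
    rw [intervalIntegral.integral_const_mul, beta_sym (n+1)]
    have hcat : ((n:ℝ)+2) * (catalan (n+1) : ℝ) = ((2*(n+1)).choose (n+1) : ℝ) := by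
      have h := succ_mul_catalan_eq_centralBinom (n+1)
      rw [Nat.centralBinom_eq_two_mul_choose] at h
      have := congrArg (Nat.cast : ℕ → ℝ) h
      push_cast at this ⊢
      linarith
    have hcatpos : (0:ℝ) < (catalan (n+1) : ℝ) := by
      have hp : 0 < catalan (n+1) := by
        rcases Nat.eq_zero_or_pos (catalan (n+1)) with h0 | h0
        · exfalso
          have hb := Nat.centralBinom_pos (n+1)
          rw [← succ_mul_catalan_eq_centralBinom, h0, Nat.mul_zero] at hb
          exact lt_irrefl 0 hb
        · exact h0
      exact_mod_cast hp
    have hchpos : (0:ℝ) < ((2*(n+1)).choose (n+1) : ℝ) := by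
      exact_mod_cast Nat.cast_pos.mpr (Nat.choose_pos (by omega))
    rw [← hcat]
    push_cast
    have h2 : (2*((n:ℝ)+1)+1) ≠ 0 := by positivity
    field_simp
    ring
  -- integrability
  have hIntg : ∀ n : ℕ, IntegrableOn (F n) (Set.Ioc (0:ℝ) 1) volume := by
    intro n
    apply Continuous.integrableOn_Ioc
    fun_prop
  -- summability of integrals of norms
  have hxabs : |x| < 1 := by rw [abs_of_pos hx0]; exact hx1
  have hbound := (hasSum_nn hxabs).summable
  have hnorm : Summable fun n => ∫ t in Set.Ioc (0:ℝ) 1, ‖F n t‖ := by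
    apply Summable.of_nonneg_of_le
      (fun n => integral_nonneg (fun t => norm_nonneg _))
      (fun n => ?_) hbound
    have he : ∫ t in Set.Ioc (0:ℝ) 1, ‖F n t‖
        = ∫ t in Set.Ioc (0:ℝ) 1, F n t := by
      apply setIntegral_congr_fun measurableSet_Ioc
      intro t ht
      apply Real.norm_of_nonneg
      have := (hu_mem t ht).1
      rw [hF]; positivity
    rw [he]
    calc ∫ t in Set.Ioc (0:ℝ) 1, F n t
        ≤ ∫ t in Set.Ioc (0:ℝ) 1, (fun _ => ((n:ℝ)+1)*((n:ℝ)+2)*x^(n+1)) t := by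
          apply setIntegral_mono_on (hIntg n) (integrableOn_const measure_Ioc_lt_top.ne) measurableSet_Ioc
          intro t ht
          obtain ⟨h0, h1⟩ := hu_mem t ht
          rw [hF]
          simp only
          have : (4*x*(t*(1-t)))^(n+1) ≤ x^(n+1) := pow_le_pow_left₀ h0 h1 (n+1)
          nlinarith [this, sq_nonneg ((n:ℝ)+1)]
      _ = ((n:ℝ)+1)*((n:ℝ)+2)*x^(n+1) := by
          simp [Measure.restrict_apply, Real.volume_Ioc]
  -- the swap
  have hswap := hasSum_integral_of_summable_integral_norm
    (μ := volume.restrict (Set.Ioc (0:ℝ) 1)) hIntg hnorm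
  -- identify the value
  have hval : ∫ t in Set.Ioc (0:ℝ) 1, (∑' n, F n t)
      = (3 - 2*(1-x))/(4*(1-x)^2)
        + (3 - 4*(1-x))/(4*(1-x)^3 * Real.sqrt (x/(1-x)))
          * Real.arctan (Real.sqrt (x/(1-x))) := by
    rw [← ftc_eval hx0 hx1]
    have hset : ∫ t in Set.Ioc (0:ℝ) 1, (∑' n, F n t)
        = ∫ t in Set.Ioc (0:ℝ) 1, 8*x*t*(1-t)/(1-4*x*t*(1-t))^3 := by
      apply setIntegral_congr_fun measurableSet_Ioc
      intro t ht
      obtain ⟨h0, h1⟩ := hu_mem t ht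
      have habs : |4*x*(t*(1-t))| < 1 := by
        rw [abs_of_nonneg h0]; linarith
      have htsum := (hasSum_nn habs).tsum_eq
      simp only [hF]
      rw [htsum]
      have hD := D_pos hx0 hx1 t
      rw [show 1-4*x*(t*(1-t)) = 1-4*x*t*(1-t) by ring]
      field_simp
      ring
    rw [hset, ← intervalIntegral.integral_of_le zero_le_one]
  rw [hval] at hswap
  have hfun : (fun n => ∫ t in Set.Ioc (0:ℝ) 1, F n t)
      = fun n : ℕ => 4^(n+1) * ((n:ℝ)+1) * x^(n+1) / ((2*((n:ℝ)+1)+1) * (catalan (n+1) : ℝ)) :=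
    funext hInt
  rwa [hfun] at hswap

set_option maxHeartbeats 3200000 in
/-- Theorem 3 of the paper (Fibonacci part): for `r` even and any integer `s`,
`∑_{n=1}^∞ 4^n·n·F_{rn+s}/((2n+1)·L_r^n·C_n)` has the stated closed form. -/
theorem fib_even_r_catalan_sum (r s : ℤ) (hr : Even r) :
    ∑' n : ℕ, 4 ^ (n + 1) * ((n : ℝ) + 1) * fibZ (r * ((n : ℤ) + 1) + s)
        / ((2 * ((n : ℝ) + 1) + 1) * lucasZ r ^ (n + 1) * (catalan (n + 1) : ℝ))
      = (fibZ (3 * r + s) + lucasZ r / 2 * fibZ (2 * r + s)) * (lucasZ r / 2)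
        + (lucasZ r * lucasZ (2 * r + s) - 4 * lucasZ (3 * r + s))
            * (lucasZ r ^ 2 / (4 * Real.sqrt 5)) * Real.arctan (goldenBeta ^ r)
        + (4 * lucasZ (3 * r + s) - lucasZ r * lucasZ (2 * r + s)
            + (4 * fibZ (3 * r + s) - lucasZ r * fibZ (2 * r + s)) * Real.sqrt 5)
            * (Real.pi * lucasZ r ^ 2 / (16 * Real.sqrt 5)) := by
  have h5 : (2:ℝ) < Real.sqrt 5 := by
    have : Real.sqrt 4 < Real.sqrt 5 := Real.sqrt_lt_sqrt (by norm_num) (by norm_num)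
    rwa [show (4:ℝ) = 2^2 by norm_num, Real.sqrt_sq (by norm_num : (0:ℝ) ≤ 2)] at this
  have h5pos : (0:ℝ) < Real.sqrt 5 := by linarith
  have hsq5 : Real.sqrt 5 * Real.sqrt 5 = 5 := Real.mul_self_sqrt (by norm_num)
  have hα : 0 < goldenAlpha := by unfold goldenAlpha; linarith
  have hβ : goldenBeta < 0 := by unfold goldenBeta; linarith
  have hαne : goldenAlpha ≠ 0 := hα.ne'
  have hβne : goldenBeta ≠ 0 := hβ.ne
  have hαβ : goldenAlpha * goldenBeta = -1 := by
    unfold goldenAlpha goldenBeta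
    nlinarith [hsq5]
  -- powers
  have hA : 0 < goldenAlpha ^ r := zpow_pos hα r
  have hB : 0 < goldenBeta ^ r := by
    obtain ⟨k, hk⟩ := hr
    rw [hk, zpow_add₀ hβne]
    exact mul_self_pos.mpr (zpow_ne_zero k hβne)
  have hAB : goldenAlpha ^ r * goldenBeta ^ r = 1 := by
    rw [← mul_zpow, hαβ]
    obtain ⟨k, hk⟩ := hr
    rw [hk, zpow_add₀ (by norm_num : (-1:ℝ) ≠ 0), ← mul_zpow]
    norm_num
  have hL : 0 < lucasZ r := by unfold lucasZ; linarith
  have hLne : lucasZ r ≠ 0 := hL.ne'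
  set A := goldenAlpha ^ r with hAdef
  set B := goldenBeta ^ r with hBdef
  set L := lucasZ r with hLdef
  have hLAB : L = A + B := rfl
  -- the two parameters
  set a := A / L with hadef
  set b := B / L with hbdef
  have ha0 : 0 < a := div_pos hA hL
  have hb0 : 0 < b := div_pos hB hL
  have hab : a + b = 1 := by rw [hadef, hbdef, hLAB]; field_simp
  have ha1 : a < 1 := by linarith
  have hb1 : b < 1 := by linarith
  have h1a : (1:ℝ) - a = b := by linarith
  have h1b : (1:ℝ) - b = a := by linarith
  -- sqrt identifications
  have hBA : B = A⁻¹ := by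
    field_simp
    linarith [hAB]
  have hsqa : Real.sqrt (a / b) = A := by
    have : a / b = A ^ 2 := by
      rw [hadef, hbdef, hBA]
      field_simp
    rw [this, Real.sqrt_sq hA.le]
  have hsqb : Real.sqrt (b / a) = B := by
    have : b / a = B ^ 2 := by
      rw [hadef, hbdef, hBA]
      field_simp
    rw [this, Real.sqrt_sq hB.le]
  have harcA : Real.arctan A = Real.pi / 2 - Real.arctan B := by
    rw [show A = B⁻¹ by rw [hBA]; simp]
    exact Real.arctan_inv_of_pos hB
  set T := Real.arctan B with hT
  set P := goldenAlpha ^ s with hP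
  set Q := goldenBeta ^ s with hQ
  -- the combined HasSum
  have hsA := hasSum_G ha0 ha1
  have hsB := hasSum_G hb0 hb1
  have hcomb := (hsA.mul_left (P/Real.sqrt 5)).sub (hsB.mul_left (Q/Real.sqrt 5))
  -- identify the terms
  have hterm : (fun n : ℕ => 4 ^ (n + 1) * ((n : ℝ) + 1) * fibZ (r * ((n : ℤ) + 1) + s)
        / ((2 * ((n : ℝ) + 1) + 1) * L ^ (n + 1) * (catalan (n + 1) : ℝ)))
      = fun n : ℕ =>
        P/Real.sqrt 5 * (4^(n+1) * ((n:ℝ)+1) * a^(n+1) / ((2*((n:ℝ)+1)+1) * (catalan (n+1) : ℝ)))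
        - Q/Real.sqrt 5 * (4^(n+1) * ((n:ℝ)+1) * b^(n+1) / ((2*((n:ℝ)+1)+1) * (catalan (n+1) : ℝ))) := by
    funext n
    have hzA : goldenAlpha ^ (r*((n:ℤ)+1)+s) = A ^ (n+1) * P := by
      rw [hAdef, hP, zpow_add₀ hαne, zpow_mul]
      congr 1
    have hzB : goldenBeta ^ (r*((n:ℤ)+1)+s) = B ^ (n+1) * Q := by
      rw [hBdef, hQ, zpow_add₀ hβne, zpow_mul]
      congr 1
    rw [fibZ, hzA, hzB, hadef, hbdef]
    have hcatpos : (0:ℝ) < (catalan (n+1) : ℝ) := by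
      have hp : 0 < catalan (n+1) := by
        rcases Nat.eq_zero_or_pos (catalan (n+1)) with h0 | h0
        · exfalso
          have hb' := Nat.centralBinom_pos (n+1)
          rw [← succ_mul_catalan_eq_centralBinom, h0, Nat.mul_zero] at hb'
          exact lt_irrefl 0 hb'
        · exact h0
      exact_mod_cast hp
    have h2n : (2*((n:ℝ)+1)+1) ≠ 0 := by positivity
    rw [div_pow, div_pow]
    field_simp
  rw [hterm, hcomb.tsum_eq]
  -- rewrite the closed forms
  rw [h1a, h1b, hsqa, hsqb, harcA, ← hT]
  -- rewrite RHS fibZ/lucasZ in terms of A B P Q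
  have hz3 : ∀ (γ : ℝ), γ ≠ 0 → γ ^ (3*r+s) = (γ^r)^(3:ℕ) * γ^s := by
    intro γ hγ
    rw [zpow_add₀ hγ, mul_comm (3:ℤ) r, zpow_mul]
    norm_cast
  have hz2 : ∀ (γ : ℝ), γ ≠ 0 → γ ^ (2*r+s) = (γ^r)^(2:ℕ) * γ^s := by
    intro γ hγ
    rw [zpow_add₀ hγ, mul_comm (2:ℤ) r, zpow_mul]
    norm_cast
  rw [show fibZ (3*r+s) = (A^(3:ℕ)*P - B^(3:ℕ)*Q)/Real.sqrt 5 by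
        rw [fibZ, hz3 _ hαne, hz3 _ hβne],
      show fibZ (2*r+s) = (A^(2:ℕ)*P - B^(2:ℕ)*Q)/Real.sqrt 5 by
        rw [fibZ, hz2 _ hαne, hz2 _ hβne],
      show lucasZ (3*r+s) = A^(3:ℕ)*P + B^(3:ℕ)*Q by
        rw [lucasZ, hz3 _ hαne, hz3 _ hβne],
      show lucasZ (2*r+s) = A^(2:ℕ)*P + B^(2:ℕ)*Q by
        rw [lucasZ, hz2 _ hαne, hz2 _ hβne]]
  -- now pure algebra
  rw [hadef, hbdef, hLAB, hBA]
  have hAne : A ≠ 0 := hA.ne'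
  have hsum_ne : A + A⁻¹ ≠ 0 := by positivity
  have hb' : A + A⁻¹ - A ≠ 0 := by
    have : A + A⁻¹ - A = A⁻¹ := by ring
    rw [this]
    positivity
  field_simp
  ring
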